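/- arXiv:math/0010063 — 2 statements merged into one kernel-verified Lean document; each statement's English description precedes it below -/
import Mathlib

section
/- Let X₁ and X₂ be independent logistic random variables and h(x) = P(X₁ + X₂ > x) for x ≥ 0. Then the mean of the probability density h on [0,∞) equals π²/6, i.e., ∫_0^∞ x P(X₁ + X₂ > x) dx = π²/6. -/
/-!
Layer cake turns the left side into `E[(S⁺)²] / 2` for `S = X₁ + X₂`. The law of `S` is
symmetric, so `E[(S⁺)²] = E[S²] / 2`, and symmetry of `X₂` also gives `E[S²] = E[X₁²] + E[X₂²]`,
since averaging `(a + b)²` and `(a - b)²` leaves `a² + b²`. Working in `ℝ≥0∞` keeps every step free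
of integrability conditions. By the same two facts the logistic second moment is
`4 ∫₀^∞ t σ(-t) dt`, where `σ` is the sigmoid (the logistic tail), and the Fermi–Dirac integral
`∫₀^∞ t / (1 + eᵗ) dt = π² / 12` follows from the Bose–Einstein integrals
`∫₀^∞ t / (e^{ct} - 1) dt = π² / (6c²)`, obtained by expanding into a geometric series and
summing `∑ 1 / n² = π² / 6`.
-/

open MeasureTheory ProbabilityTheory Set Real Filter Topology

/-- The logistic distribution on ℝ, with density `(e^{x/2}+e^{-x/2})⁻²`. -/
noncomputable def logisticMeasure : Measure ℝ :=
  volume.withDensity fun x => ENNReal.ofReal ((Real.exp (x / 2) + Real.exp (-x / 2)) ^ 2)⁻¹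

instance MeasureTheory.Measure.isNegInvariant_conv {μ ν : Measure ℝ} [SFinite μ] [SFinite ν]
    [μ.IsNegInvariant] [ν.IsNegInvariant] : (μ ∗ ν).IsNegInvariant := by
  have h : (μ ∗ ν).map Neg.neg = μ.map Neg.neg ∗ ν.map Neg.neg :=
    Measure.map_conv_continuousLinearMap (-ContinuousLinearMap.id ℝ ℝ)
  rw [Measure.map_neg_eq_self μ, Measure.map_neg_eq_self ν] at h
  exact ⟨h⟩

theorem lintegral_sq_conv {μ ν : Measure ℝ} [IsProbabilityMeasure μ] [IsProbabilityMeasure ν]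
    [ν.IsNegInvariant] :
    ∫⁻ x, .ofReal (x ^ 2) ∂(μ ∗ ν) = ∫⁻ x, .ofReal (x ^ 2) ∂μ + ∫⁻ x, .ofReal (x ^ 2) ∂ν := by
  have parallelogram (a b : ℝ) : ENNReal.ofReal ((a + b) ^ 2) + .ofReal ((a + -b) ^ 2)
      = 2 * (.ofReal (a ^ 2) + .ofReal (b ^ 2)) := by
    rw [← ENNReal.ofReal_add (by positivity) (by positivity),
      ← ENNReal.ofReal_add (by positivity) (by positivity), ← ENNReal.ofReal_ofNat,
      ← ENNReal.ofReal_mul (by norm_num)]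
    ring_nf
  have inner (a : ℝ) :
      ∫⁻ b, .ofReal ((a + b) ^ 2) ∂ν = .ofReal (a ^ 2) + ∫⁻ b, .ofReal (b ^ 2) ∂ν := by
    refine (ENNReal.mul_right_inj two_ne_zero ENNReal.ofNat_ne_top).mp ?_
    calc 2 * ∫⁻ b, .ofReal ((a + b) ^ 2) ∂ν
        = ∫⁻ b, .ofReal ((a + b) ^ 2) ∂ν + ∫⁻ b, .ofReal ((a + -b) ^ 2) ∂ν := by
          rw [two_mul, lintegral_neg_eq_self (fun b => ENNReal.ofReal ((a + b) ^ 2))]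
      _ = ∫⁻ b, 2 * (.ofReal (a ^ 2) + .ofReal (b ^ 2)) ∂ν := by
          rw [← lintegral_add_left (by fun_prop)]
          simp_rw [parallelogram]
      _ = 2 * (.ofReal (a ^ 2) + ∫⁻ b, .ofReal (b ^ 2) ∂ν) := by
          rw [lintegral_const_mul _ (by fun_prop), lintegral_add_left measurable_const,
            lintegral_const, measure_univ, mul_one]
  rw [Measure.lintegral_conv (by fun_prop)]
  simp_rw [inner]
  rw [lintegral_add_right _ measurable_const, lintegral_const, measure_univ, mul_one]

theorem lintegral_sq_eq_two_mul_lintegral_max_sq (ρ : Measure ℝ) [ρ.IsNegInvariant] :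
    ∫⁻ x, .ofReal (x ^ 2) ∂ρ = 2 * ∫⁻ x, .ofReal (max x 0 ^ 2) ∂ρ := by
  have split (x : ℝ) :
      ENNReal.ofReal (max x 0 ^ 2) + .ofReal (max (-x) 0 ^ 2) = .ofReal (x ^ 2) := by
    rw [← ENNReal.ofReal_add (by positivity) (by positivity)]
    rcases le_total 0 x with hx | hx <;> simp [hx]
  rw [two_mul]
  nth_rw 3 [← lintegral_neg_eq_self]
  rw [← lintegral_add_left (by fun_prop)]
  simp_rw [split]

theorem lintegral_max_sq_eq_two_mul_setLIntegral_measure_Ioi (ρ : Measure ℝ) :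
    ∫⁻ x, .ofReal (max x 0 ^ 2) ∂ρ = 2 * ∫⁻ t in Ioi 0, ρ (Ioi t) * .ofReal t := by
  have h := lintegral_rpow_eq_lintegral_meas_lt_mul ρ
    (Eventually.of_forall fun x => le_max_right x 0) (by fun_prop) two_pos
  simp only [Real.rpow_two, show (2 : ℝ) - 1 = 1 by norm_num, Real.rpow_one,
    ENNReal.ofReal_ofNat] at h
  rw [h]
  congr 1
  refine setLIntegral_congr_fun measurableSet_Ioi fun t ht => ?_
  congr 2
  ext x
  simp [not_lt_of_gt ht.out]

theorem lintegral_sq_eq_four_mul_setLIntegral_measure_Ioi (ρ : Measure ℝ) [ρ.IsNegInvariant] :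
    ∫⁻ x, .ofReal (x ^ 2) ∂ρ = 4 * ∫⁻ t in Ioi 0, ρ (Ioi t) * .ofReal t := by
  rw [lintegral_sq_eq_two_mul_lintegral_max_sq,
    lintegral_max_sq_eq_two_mul_setLIntegral_measure_Ioi, ← mul_assoc]
  norm_num

theorem setIntegral_mul_measure_Ioi (ρ : Measure ℝ) [IsFiniteMeasure ρ] :
    ∫ t in Ioi 0, t * (ρ (Ioi t)).toReal = (∫⁻ t in Ioi 0, ρ (Ioi t) * .ofReal t).toReal := by
  have hanti : Antitone fun t => ρ (Ioi t) := fun s t hst => measure_mono (Ioi_subset_Ioi hst)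
  rw [integral_eq_lintegral_of_nonneg_ae ?_ ?_]
  · congr 1
    refine setLIntegral_congr_fun measurableSet_Ioi fun t ht => ?_
    rw [ENNReal.ofReal_mul ht.out.le, ENNReal.ofReal_toReal (measure_ne_top ρ _), mul_comm]
  · filter_upwards [ae_restrict_mem measurableSet_Ioi] with t ht
    exact mul_nonneg ht.out.le ENNReal.toReal_nonneg
  · exact (measurable_id.mul hanti.measurable.ennreal_toReal).aestronglyMeasurable

theorem hasSum_mul_exp_neg_mul {c x : ℝ} (hc : 0 < c) (hx : 0 < x) :
    HasSum (fun n : ℕ => x * exp (-((n + 1) * c * x))) (x / (exp (c * x) - 1)) := by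
  have hr : exp (-(c * x)) < 1 := exp_lt_one_iff.mpr (by nlinarith)
  have hE : exp (c * x) - 1 ≠ 0 := (sub_pos.mpr (one_lt_exp_iff.mpr (by positivity))).ne'
  have hterms : (fun n : ℕ => x * exp (-((n + 1) * c * x)))
      = fun n : ℕ => x * exp (-(c * x)) * exp (-(c * x)) ^ n := by
    ext n
    rw [mul_assoc x, ← pow_succ', ← exp_nat_mul]
    push_cast
    ring_nf
  have hsum : x / (exp (c * x) - 1) = x * exp (-(c * x)) * (1 - exp (-(c * x)))⁻¹ := by
    rw [exp_neg]
    field_simp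
  rw [hterms, hsum]
  exact (hasSum_geometric_of_lt_one (exp_pos _).le hr).mul_left _

theorem lintegral_mul_exp_neg_mul {a : ℝ} (ha : 0 < a) :
    ∫⁻ x in Ioi 0, .ofReal (x * exp (-(a * x))) = .ofReal (1 / a ^ 2) := by
  have h := integral_rpow_mul_exp_neg_mul_Ioi two_pos ha
  simp only [show (2 : ℝ) - 1 = 1 by norm_num, Real.rpow_one, Real.rpow_two, Gamma_two, mul_one,
    div_pow, one_pow] at h
  rw [← ofReal_integral_eq_lintegral_ofReal
    (Integrable.of_integral_ne_zero (by rw [h]; positivity)), h]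
  filter_upwards [ae_restrict_mem measurableSet_Ioi] with x hx
  exact mul_nonneg hx.out.le (exp_pos _).le

theorem lintegral_div_exp_mul_sub_one {c : ℝ} (hc : 0 < c) :
    ∫⁻ x in Ioi 0, .ofReal (x / (exp (c * x) - 1)) = .ofReal (π ^ 2 / (6 * c ^ 2)) := by
  have hzeta : HasSum (fun n : ℕ => 1 / ((n + 1) * c) ^ 2) (π ^ 2 / (6 * c ^ 2)) := by
    have h : HasSum (fun n : ℕ => 1 / ((n : ℝ) + 1) ^ 2) (π ^ 2 / 6) := by
      simpa using (hasSum_nat_add_iff' 1).mpr hasSum_zeta_two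
    have hterms : (fun n : ℕ => 1 / (((n : ℝ) + 1) * c) ^ 2)
        = fun n : ℕ => 1 / ((n : ℝ) + 1) ^ 2 * (1 / c ^ 2) := by
      ext n
      rw [mul_pow, one_div_mul_one_div]
    rw [hterms, show π ^ 2 / (6 * c ^ 2) = π ^ 2 / 6 * (1 / c ^ 2) by ring]
    exact h.mul_right _
  calc ∫⁻ x in Ioi 0, .ofReal (x / (exp (c * x) - 1))
      = ∫⁻ x in Ioi 0, ∑' n : ℕ, .ofReal (x * exp (-((n + 1) * c * x))) := by
        refine setLIntegral_congr_fun measurableSet_Ioi fun x hx => ?_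
        have h := hasSum_mul_exp_neg_mul hc hx
        rw [← h.tsum_eq, ENNReal.ofReal_tsum_of_nonneg
          (fun n => mul_nonneg hx.out.le (exp_pos _).le) h.summable]
    _ = ∑' n : ℕ, .ofReal (1 / ((n + 1) * c) ^ 2) := by
        rw [lintegral_tsum fun n => by fun_prop]
        congr 1 with n
        exact lintegral_mul_exp_neg_mul (by positivity)
    _ = .ofReal (π ^ 2 / (6 * c ^ 2)) := by
        rw [← hzeta.tsum_eq, ENNReal.ofReal_tsum_of_nonneg (fun n => by positivity) hzeta.summable]

theorem integral_div_exp_mul_sub_one {c : ℝ} (hc : 0 < c) :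
    ∫ x in Ioi 0, x / (exp (c * x) - 1) = π ^ 2 / (6 * c ^ 2) := by
  rw [integral_eq_lintegral_of_nonneg_ae ?_ (Measurable.aestronglyMeasurable (by fun_prop)),
    lintegral_div_exp_mul_sub_one hc, ENNReal.toReal_ofReal (by positivity)]
  filter_upwards [ae_restrict_mem measurableSet_Ioi] with x hx
  have : 1 < exp (c * x) := one_lt_exp_iff.mpr (mul_pos hc hx)
  exact div_nonneg hx.out.le (by linarith)

theorem integrableOn_div_exp_mul_sub_one {c : ℝ} (hc : 0 < c) :
    IntegrableOn (fun x => x / (exp (c * x) - 1)) (Ioi 0) :=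
  Integrable.of_integral_ne_zero (by rw [integral_div_exp_mul_sub_one hc]; positivity)

theorem mul_sigmoid_neg_eq_sub {x : ℝ} (hx : 0 < x) :
    x * sigmoid (-x) = x / (exp (1 * x) - 1) - 2 * (x / (exp (2 * x) - 1)) := by
  have h1 : 1 < exp x := one_lt_exp_iff.mpr hx
  rw [sigmoid_def, neg_neg, one_mul, show exp (2 * x) = exp x ^ 2 by rw [← exp_nat_mul]; norm_num]
  have : exp x - 1 ≠ 0 := by linarith
  have : exp x ^ 2 - 1 ≠ 0 := by nlinarith
  field_simp
  ring

theorem integral_mul_sigmoid_neg : ∫ x in Ioi 0, x * sigmoid (-x) = π ^ 2 / 12 := by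
  rw [setIntegral_congr_fun measurableSet_Ioi fun x hx => mul_sigmoid_neg_eq_sub hx,
    integral_sub (integrableOn_div_exp_mul_sub_one one_pos)
      ((integrableOn_div_exp_mul_sub_one two_pos).const_mul 2),
    integral_const_mul, integral_div_exp_mul_sub_one one_pos, integral_div_exp_mul_sub_one two_pos]
  ring

theorem integrableOn_mul_sigmoid_neg : IntegrableOn (fun x => x * sigmoid (-x)) (Ioi 0) :=
  Integrable.of_integral_ne_zero (by rw [integral_mul_sigmoid_neg]; positivity)

theorem hasDerivAt_sigmoid' (x : ℝ) : HasDerivAt sigmoid (sigmoid x * sigmoid (-x)) x := by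
  simpa [sigmoid_neg] using hasDerivAt_sigmoid x

theorem logistic_density_eq_sigmoid_mul (x : ℝ) :
    ((exp (x / 2) + exp (-x / 2)) ^ 2)⁻¹ = sigmoid x * sigmoid (-x) := by
  have hsq : (exp (x / 2) + exp (-x / 2)) ^ 2 = (1 + exp (-x)) * (1 + exp x) := by
    have h1 : exp (x / 2) ^ 2 = exp x := by rw [← exp_nat_mul]; ring_nf
    have h2 : exp (-x / 2) ^ 2 = exp (-x) := by rw [← exp_nat_mul]; ring_nf
    have h3 : exp x * exp (-x) = 1 := by rw [← exp_add]; simp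
    have h4 : exp (x / 2) * exp (-x / 2) = 1 := by rw [← exp_add]; ring_nf; exact exp_zero
    linear_combination h1 + h2 + 2 * h4 - h3
  rw [hsq, mul_inv, sigmoid_def, sigmoid_def, neg_neg]

theorem logisticMeasure_eq_withDensity :
    logisticMeasure = volume.withDensity fun x => .ofReal (sigmoid x * sigmoid (-x)) := by
  simp_rw [logisticMeasure, logistic_density_eq_sigmoid_mul]

theorem logisticMeasure_Ioi (t : ℝ) : logisticMeasure (Ioi t) = .ofReal (sigmoid (-t)) := by
  have hderiv : ∀ x ∈ Ici t, HasDerivAt sigmoid (sigmoid x * sigmoid (-x)) x :=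
    fun x _ => hasDerivAt_sigmoid' x
  have hnonneg : ∀ x ∈ Ioi t, 0 ≤ sigmoid x * sigmoid (-x) :=
    fun x _ => mul_nonneg (sigmoid_nonneg x) (sigmoid_nonneg (-x))
  rw [logisticMeasure_eq_withDensity, withDensity_apply _ measurableSet_Ioi,
    ← ofReal_integral_eq_lintegral_ofReal
      (integrableOn_Ioi_deriv_of_nonneg' hderiv hnonneg tendsto_sigmoid_atTop)
      ((ae_restrict_mem measurableSet_Ioi).mono hnonneg),
    integral_Ioi_of_hasDerivAt_of_nonneg' hderiv hnonneg tendsto_sigmoid_atTop, sigmoid_neg]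

instance : IsProbabilityMeasure logisticMeasure := by
  have hmono : Monotone fun t : ℝ => Ioi (-t) := fun s t hst => Ioi_subset_Ioi (neg_le_neg hst)
  have hunion : (⋃ t : ℝ, Ioi (-t)) = univ :=
    eq_univ_of_forall fun x => mem_iUnion.mpr ⟨-x + 1, by simp⟩
  have hlim := tendsto_measure_iUnion_atTop (μ := logisticMeasure) hmono
  simp only [hunion, Function.comp_def, logisticMeasure_Ioi, neg_neg] at hlim
  refine ⟨tendsto_nhds_unique hlim ?_⟩
  simpa [Function.comp_def] using (ENNReal.continuous_ofReal.tendsto 1).comp tendsto_sigmoid_atTop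

instance : logisticMeasure.IsNegInvariant := by
  refine ⟨Measure.ext fun s hs => ?_⟩
  rw [Measure.neg, Measure.map_apply measurable_neg hs, logisticMeasure_eq_withDensity,
    withDensity_apply _ (measurable_neg hs), withDensity_apply _ hs,
    ← lintegral_indicator (measurable_neg hs), ← lintegral_indicator hs,
    ← lintegral_neg_eq_self]
  congr 1 with x
  by_cases hx : x ∈ s <;> simp [indicator, hx, mul_comm]

theorem lintegral_sq_logisticMeasure :
    ∫⁻ x, .ofReal (x ^ 2) ∂logisticMeasure = .ofReal (π ^ 2 / 3) := by
  have hnonneg : 0 ≤ᵐ[volume.restrict (Ioi 0)] fun t => t * sigmoid (-t) := by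
    filter_upwards [ae_restrict_mem measurableSet_Ioi] with t ht
    exact mul_nonneg ht.out.le (sigmoid_nonneg _)
  calc ∫⁻ x, .ofReal (x ^ 2) ∂logisticMeasure
      = 4 * ∫⁻ t in Ioi 0, logisticMeasure (Ioi t) * .ofReal t :=
        lintegral_sq_eq_four_mul_setLIntegral_measure_Ioi _
    _ = 4 * .ofReal (∫ t in Ioi 0, t * sigmoid (-t)) := by
        rw [ofReal_integral_eq_lintegral_ofReal integrableOn_mul_sigmoid_neg hnonneg]
        congr 1
        refine setLIntegral_congr_fun measurableSet_Ioi fun t ht => ?_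
        rw [logisticMeasure_Ioi, ENNReal.ofReal_mul ht.out.le, mul_comm]
    _ = .ofReal (π ^ 2 / 3) := by
        rw [integral_mul_sigmoid_neg, ← ENNReal.ofReal_ofNat, ← ENNReal.ofReal_mul (by norm_num)]
        ring_nf

theorem tail_density_mean_pi_sq_div_six
    {Ω : Type*} [MeasureSpace Ω] (P : Measure Ω) [IsProbabilityMeasure P]
    (X₁ X₂ : Ω → ℝ) (hm₁ : Measurable X₁) (hm₂ : Measurable X₂)
    (hindep : IndepFun X₁ X₂ P)
    (h₁ : Measure.map X₁ P = logisticMeasure)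
    (h₂ : Measure.map X₂ P = logisticMeasure) :
    ∫ x in Set.Ioi (0 : ℝ), x * (P {ω | x < X₁ ω + X₂ ω}).toReal = Real.pi ^ 2 / 6 := by
  have hlaw : P.map (X₁ + X₂) = logisticMeasure ∗ logisticMeasure := by
    rw [hindep.map_add_eq_map_conv_map hm₁ hm₂, h₁, h₂]
  have htail (x : ℝ) : P {ω | x < X₁ ω + X₂ ω} = P.map (X₁ + X₂) (Ioi x) :=
    (Measure.map_apply (hm₁.add hm₂) measurableSet_Ioi).symm
  have hmean : ∫⁻ t in Ioi 0, (logisticMeasure ∗ logisticMeasure) (Ioi t) * .ofReal t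
      = .ofReal (π ^ 2 / 6) := by
    refine (ENNReal.mul_right_inj (a := 4) (by norm_num) (by norm_num)).mp ?_
    rw [← lintegral_sq_eq_four_mul_setLIntegral_measure_Ioi, lintegral_sq_conv,
      lintegral_sq_logisticMeasure, ← ENNReal.ofReal_add (by positivity) (by positivity),
      ← ENNReal.ofReal_ofNat, ← ENNReal.ofReal_mul (by norm_num)]
    ring_nf
  simp_rw [htail, hlaw, setIntegral_mul_measure_Ioi, hmean]
  exact ENNReal.toReal_ofReal (by positivity)
end

section
/- Let X, X₁, X₂ be i.i.d. logistic random variables and η an independent exponential random variable with mean 1. Then X has the same distribution as min(X₁, X₂) + η. -/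
/-!
Write `S(s) = (1 + eˢ)⁻¹` for the logistic survival function. By independence the minimum of two
logistic variables has survival function `S²`, so if `η` is exponential,
`P(min(X₁, X₂) + η > x) = ∫₀^∞ e^{-t} S(x - t)² dt`. Since `S' = -eˢ S²`, the integrand is the
derivative of `t ↦ e^{-x} S(x - t)`, so the integral equals `e^{-x} (1 - S(x)) = S(x)`.
-/

open MeasureTheory ProbabilityTheory

open Real Set Filter Topology

namespace MeasureTheory.Measure

theorem ext_of_Ioi {α : Type*} [TopologicalSpace α] [MeasurableSpace α]
    [SecondCountableTopology α] [LinearOrder α] [OrderTopology α] [BorelSpace α]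
    (μ ν : Measure α) [IsProbabilityMeasure μ] [IsProbabilityMeasure ν]
    (h : ∀ a, μ (Ioi a) = ν (Ioi a)) : μ = ν :=
  ext_of_Iic μ ν fun a => by
    rw [← compl_Ioi, prob_compl_eq_one_sub measurableSet_Ioi,
      prob_compl_eq_one_sub measurableSet_Ioi, h]

theorem conv_apply_Ioi (μ ν : Measure ℝ) [SFinite μ] [SFinite ν] (x : ℝ) :
    (μ ∗ ν) (Ioi x) = ∫⁻ t, μ (Ioi (x - t)) ∂ν := by
  have hadd : Measurable fun p : ℝ × ℝ => p.1 + p.2 := by fun_prop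
  rw [conv, map_apply hadd measurableSet_Ioi, prod_apply_symm (hadd measurableSet_Ioi)]
  congr! with t
  ext m
  simp [sub_lt_iff_lt_add]

end MeasureTheory.Measure

namespace ProbabilityTheory

theorem IndepFun.map_min_apply_Ioi {Ω α : Type*} [MeasurableSpace Ω]
    [LinearOrder α] [TopologicalSpace α] [OrderClosedTopology α] [MeasurableSpace α]
    [OpensMeasurableSpace α] [MeasurableInf₂ α]
    {P : Measure Ω} {X Y : Ω → α} (hX : Measurable X) (hY : Measurable Y) (hXY : IndepFun X Y P)
    (a : α) :
    P.map (fun ω => min (X ω) (Y ω)) (Ioi a) = P.map X (Ioi a) * P.map Y (Ioi a) := by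
  have hmin : Measurable fun ω => min (X ω) (Y ω) := hX.inf hY
  have hpre : (fun ω => min (X ω) (Y ω)) ⁻¹' Ioi a = X ⁻¹' Ioi a ∩ Y ⁻¹' Ioi a := by
    ext ω; simp
  rw [Measure.map_apply hmin measurableSet_Ioi, Measure.map_apply hX measurableSet_Ioi,
    Measure.map_apply hY measurableSet_Ioi, hpre,
    hXY.measure_inter_preimage_eq_mul _ _ measurableSet_Ioi measurableSet_Ioi]

theorem lintegral_expMeasure (r : ℝ) (f : ℝ → ENNReal) :
    ∫⁻ t, f t ∂expMeasure r = ∫⁻ t in Ioi 0, ENNReal.ofReal (r * exp (-(r * t))) * f t := by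
  have hpdf : Measurable (exponentialPDF r) := (measurable_exponentialPDFReal r).ennreal_ofReal
  rw [show expMeasure r = volume.withDensity (exponentialPDF r) from rfl,
    lintegral_withDensity_eq_lintegral_mul_non_measurable _ hpdf
      (ae_of_all _ fun _ => ENNReal.ofReal_lt_top),
    restrict_Ioi_eq_restrict_Ici, ← lintegral_indicator measurableSet_Ici]
  congr 1 with t
  by_cases ht : 0 ≤ t
  · simp [ht, exponentialPDF_of_nonneg]
  · simp [ht, exponentialPDF_of_neg (not_le.mp ht)]

end ProbabilityTheory

theorem inv_sq_exp_half_add_exp_neg_half (u : ℝ) :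
    ((exp (u / 2) + exp (-u / 2)) ^ 2)⁻¹ = exp u / (1 + exp u) ^ 2 := by
  have hneg : exp (-u / 2) = (exp (u / 2))⁻¹ := by rw [← exp_neg, neg_div]
  have hsq : exp u = exp (u / 2) ^ 2 := by rw [← exp_nat_mul]; ring_nf
  rw [hneg, hsq]
  field_simp
  ring

theorem hasDerivAt_neg_inv_one_add_exp (u : ℝ) :
    HasDerivAt (fun u => -(1 + exp u)⁻¹) (exp u / (1 + exp u) ^ 2) u :=
  (((hasDerivAt_exp u).const_add 1).inv (by positivity)).neg.congr_deriv (by ring)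

theorem logisticMeasure_Ioi_s11 (x : ℝ) :
    logisticMeasure (Ioi x) = ENNReal.ofReal (1 + exp x)⁻¹ := by
  have hderiv : ∀ u ∈ Ici x, HasDerivAt (fun u => -(1 + exp u)⁻¹) (exp u / (1 + exp u) ^ 2) u :=
    fun u _ => hasDerivAt_neg_inv_one_add_exp u
  have hpos : ∀ u ∈ Ioi x, 0 ≤ exp u / (1 + exp u) ^ 2 := fun u _ => by positivity
  have hlim : Tendsto (fun u => -(1 + exp u)⁻¹) atTop (𝓝 0) := by
    simpa using (tendsto_atTop_add_const_left _ 1 tendsto_exp_atTop).inv_tendsto_atTop.neg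
  rw [logisticMeasure, withDensity_apply _ measurableSet_Ioi]
  simp_rw [inv_sq_exp_half_add_exp_neg_half]
  rw [← ofReal_integral_eq_lintegral_ofReal (integrableOn_Ioi_deriv_of_nonneg' hderiv hpos hlim)
    (ae_restrict_of_forall_mem measurableSet_Ioi hpos),
    integral_Ioi_of_hasDerivAt_of_nonneg' hderiv hpos hlim, zero_sub, neg_neg]

instance isProbabilityMeasure_logisticMeasure : IsProbabilityMeasure logisticMeasure := by
  constructor
  have hmono : Monotone fun x : ℝ => Ioi (-x) := fun a b hab => Ioi_subset_Ioi (neg_le_neg hab)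
  have hunion : (⋃ x : ℝ, Ioi (-x)) = univ :=
    eq_univ_of_forall fun u => mem_iUnion.2 ⟨-u + 1, by simp⟩
  have hlim : Tendsto (fun x : ℝ => ENNReal.ofReal (1 + exp (-x))⁻¹) atTop (𝓝 1) := by
    simpa using ENNReal.tendsto_ofReal
      ((tendsto_exp_neg_atTop_nhds_zero.const_add 1).inv₀ (by norm_num))
  have hunion_lim := tendsto_measure_iUnion_atTop (μ := logisticMeasure) hmono
  rw [hunion] at hunion_lim
  refine tendsto_nhds_unique hunion_lim ?_
  simpa only [Function.comp_def, logisticMeasure_Ioi_s11] using hlim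

theorem lintegral_exp_neg_mul_inv_one_add_exp_sq (x : ℝ) :
    ∫⁻ t in Ioi 0, ENNReal.ofReal (exp (-t) * ((1 + exp (x - t))⁻¹) ^ 2)
      = ENNReal.ofReal (1 + exp x)⁻¹ := by
  set g : ℝ → ℝ := fun t => exp (-x) * (1 + exp (x - t))⁻¹
  have hderiv : ∀ t ∈ Ici (0 : ℝ), HasDerivAt g (exp (-t) * ((1 + exp (x - t))⁻¹) ^ 2) t := by
    intro t _
    have h := ((hasDerivAt_neg_inv_one_add_exp (x - t)).comp t
      ((hasDerivAt_id t).const_sub x)).const_mul (-exp (-x))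
    refine (h.congr_deriv ?_).congr_of_eventuallyEq (Eventually.of_forall fun t => ?_)
    · rw [exp_sub, exp_neg, exp_neg]
      field_simp
    · simp [g]
  have hpos : ∀ t ∈ Ioi (0 : ℝ), 0 ≤ exp (-t) * ((1 + exp (x - t))⁻¹) ^ 2 :=
    fun t _ => by positivity
  have hlim : Tendsto g atTop (𝓝 (exp (-x))) := by
    have h : Tendsto (fun t => exp (x - t)) atTop (𝓝 0) :=
      tendsto_exp_atBot.comp (tendsto_atBot_add_const_left _ x tendsto_neg_atTop_atBot)
    simpa using ((h.const_add 1).inv₀ (by norm_num)).const_mul (exp (-x))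
  rw [← ofReal_integral_eq_lintegral_ofReal (integrableOn_Ioi_deriv_of_nonneg' hderiv hpos hlim)
    (ae_restrict_of_forall_mem measurableSet_Ioi hpos),
    integral_Ioi_of_hasDerivAt_of_nonneg' hderiv hpos hlim]
  congr 1
  simp only [g, sub_zero, exp_neg]
  field_simp
  ring

theorem min_logistic_plus_exponential_general
    {Ω : Type*} [MeasureSpace Ω] (P : Measure Ω) [IsProbabilityMeasure P]
    (X X₁ X₂ η : Ω → ℝ)
    (hm₁ : Measurable X₁) (hm₂ : Measurable X₂)
    (hmη : Measurable η)
    (hindep : iIndepFun ![X, X₁, X₂, η] P)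
    (hX : Measure.map X P = logisticMeasure)
    (hX₁ : Measure.map X₁ P = logisticMeasure)
    (hX₂ : Measure.map X₂ P = logisticMeasure)
    (hη : Measure.map η P = expMeasure 1) :
    Measure.map X P = Measure.map (fun ω => min (X₁ ω) (X₂ ω) + η ω) P := by
  have hindep' : iIndepFun ![X₁, X₂, η] P := hindep.precomp (g := Fin.succ) (Fin.succ_injective 3)
  have hmeas : ∀ i, Measurable (![X₁, X₂, η] i) := fun i => by fin_cases i <;> assumption
  have hmin_indep : IndepFun (fun ω => min (X₁ ω) (X₂ ω)) η P :=
    (hindep'.indepFun_prodMk hmeas 0 1 2 (by decide) (by decide)).comp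
      (φ := fun p : ℝ × ℝ => min p.1 p.2) (ψ := id) (by fun_prop) measurable_id
  have hmin : ∀ s, P.map (fun ω => min (X₁ ω) (X₂ ω)) (Ioi s)
      = ENNReal.ofReal (((1 + exp s)⁻¹) ^ 2) := fun s => by
    rw [(hindep'.indepFun (i := 0) (j := 1) (by decide)).map_min_apply_Ioi hm₁ hm₂, hX₁, hX₂,
      logisticMeasure_Ioi_s11, ← ENNReal.ofReal_mul (by positivity), sq]
  have : IsProbabilityMeasure (P.map fun ω => min (X₁ ω) (X₂ ω) + η ω) :=
    Measure.isProbabilityMeasure_map (by fun_prop)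
  rw [hX]
  refine Measure.ext_of_Ioi _ _ fun x => ?_
  change _ = P.map ((fun ω => min (X₁ ω) (X₂ ω)) + η) (Ioi x)
  rw [logisticMeasure_Ioi_s11, hmin_indep.map_add_eq_map_conv_map (hm₁.min hm₂) hmη,
    Measure.conv_apply_Ioi, hη, lintegral_expMeasure,
    ← lintegral_exp_neg_mul_inv_one_add_exp_sq x]
  refine setLIntegral_congr_fun measurableSet_Ioi fun t _ => ?_
  rw [hmin, one_mul, one_mul, ENNReal.ofReal_mul (exp_pos _).le]

theorem min_logistic_plus_exponential
    {Ω : Type*} [MeasureSpace Ω] (P : Measure Ω) [IsProbabilityMeasure P]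
    (X X₁ X₂ η : Ω → ℝ)
    (hmX : Measurable X) (hm₁ : Measurable X₁) (hm₂ : Measurable X₂)
    (hmη : Measurable η)
    (hindep : iIndepFun ![X, X₁, X₂, η] P)
    (hX : Measure.map X P = logisticMeasure)
    (hX₁ : Measure.map X₁ P = logisticMeasure)
    (hX₂ : Measure.map X₂ P = logisticMeasure)
    (hη : Measure.map η P = expMeasure 1) :
    Measure.map X P = Measure.map (fun ω => min (X₁ ω) (X₂ ω) + η ω) P :=
  min_logistic_plus_exponential_general P X X₁ X₂ η hm₁ hm₂ hmη hindep hX hX₁ hX₂ hη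
end
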